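/- Let n ≥ 1 and let M ∈ Sp(2n) have the n×n block form M = [[A, B],[C, D]] with B and D invertible. Suppose every complex eigenvalue ω of the matrix N M⁻¹ N M satisfies |ω| = 1 and ω ≠ −1. Then every complex eigenvalue μ of the n×n matrix CBᵀ is real and satisfies −1 < μ ≤ 0. -/

import Mathlib

/-!
Let `μ ≠ 0` be an eigenvalue of `C Bᵀ` and choose `l` with `(1 - l)² = 4 l μ`. Since `M` is
symplectic, `A Dᵀ - B Cᵀ = 1` and `C Dᵀ = D Cᵀ`, and multiplying
`N M - l M N = [[(l-1)A, -(1+l)B], [(1+l)C, (1-l)D]]` on the right by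
`[[(1-l)Dᵀ, 0], [-(1+l)Cᵀ, 1]]` makes it block upper triangular with corner
`4l B Cᵀ - (1-l)² = 4l (B Cᵀ - μ)`. Hence `det (N M - l M N) = 0` (the factor `(1-l)ⁿ det D`
cancels), and as `N M⁻¹ N M - l = N M⁻¹ (N M - l M N)`, `l` is an eigenvalue of `N M⁻¹ N M`.
So `|l| = 1`, `l ≠ -1`, and `4μ = (1-l)² l̄ = l + l̄ - 2 = 2 Re l - 2 ∈ (-4, 0]`.
-/

open Matrix

/-- The standard symplectic matrix `J = [[0, -Iₙ], [Iₙ, 0]]` in `n × n` block form. -/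
def Jmat (n : ℕ) : Matrix (Fin n ⊕ Fin n) (Fin n ⊕ Fin n) ℝ :=
  Matrix.fromBlocks 0 (-1) 1 0

/-- The matrix `N = [[-Iₙ, 0], [0, Iₙ]]` in `n × n` block form. -/
def Nmat (n : ℕ) : Matrix (Fin n ⊕ Fin n) (Fin n ⊕ Fin n) ℝ :=
  Matrix.fromBlocks (-1) 0 0 1

section SymplecticPencil

variable {ι R K : Type*} [DecidableEq ι] [CommRing R] [Field K]

def Nblock (ι R : Type*) [DecidableEq ι] [CommRing R] : Matrix (ι ⊕ ι) (ι ⊕ ι) R :=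
  fromBlocks (-1) 0 0 1

theorem map_Nblock {S : Type*} [CommRing S] (f : R →+* S) :
    (Nblock ι R).map f = Nblock ι S := by
  simp [Nblock, fromBlocks_map, Matrix.map_neg]

variable [Fintype ι]

theorem Nblock_mul_self : Nblock ι R * Nblock ι R = 1 := by
  simp [Nblock, fromBlocks_multiply, ← fromBlocks_one]

theorem mul_transpose_eq_of_fromBlocks_mem_symplecticGroup {A B C D : Matrix ι ι R}
    (h : fromBlocks A B C D ∈ symplecticGroup ι R) :
    A * Dᵀ = 1 + B * Cᵀ ∧ C * Dᵀ = D * Cᵀ := by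
  have h' := SymplecticGroup.transpose_mem h
  rw [fromBlocks_transpose, SymplecticGroup.fromBlocks_mem_iff] at h'
  simp only [transpose_transpose] at h'
  exact ⟨eq_add_of_sub_eq h'.2.2, h'.2.1⟩

theorem Nblock_mul_sub_smul_mul_Nblock (A B C D : Matrix ι ι R) (l : R) :
    Nblock ι R * fromBlocks A B C D - l • (fromBlocks A B C D * Nblock ι R) =
      fromBlocks ((l - 1) • A) (-((1 + l) • B)) ((1 + l) • C) ((1 - l) • D) := by
  simp only [Nblock, fromBlocks_multiply, fromBlocks_smul, Matrix.neg_mul, Matrix.one_mul,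
    Matrix.zero_mul, Matrix.mul_zero, Matrix.mul_one, Matrix.mul_neg, add_zero, zero_add,
    sub_eq_add_neg, fromBlocks_neg, fromBlocks_add]
  congr 1 <;> module

theorem det_fromBlocks_pencil {A B C D : Matrix ι ι K} (hAD : A * Dᵀ = 1 + B * Cᵀ)
    (hCD : C * Dᵀ = D * Cᵀ) (hD : IsUnit D.det) {l : K} (hl : l ≠ 1) :
    (fromBlocks ((l - 1) • A) (-((1 + l) • B)) ((1 + l) • C) ((1 - l) • D)).det =
      ((4 * l) • (B * Cᵀ) - (1 - l) ^ 2 • (1 : Matrix ι ι K)).det := by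
  have key : fromBlocks ((l - 1) • A) (-((1 + l) • B)) ((1 + l) • C) ((1 - l) • D) *
      fromBlocks ((1 - l) • Dᵀ) 0 ((-(1 + l)) • Cᵀ) 1 =
      fromBlocks ((4 * l) • (B * Cᵀ) - (1 - l) ^ 2 • 1) (-((1 + l) • B)) 0 ((1 - l) • D) := by
    simp only [fromBlocks_multiply, Matrix.smul_mul, Matrix.mul_smul, Matrix.neg_mul,
      smul_smul, hAD, hCD, mul_zero, mul_one, smul_add]
    congr 1 <;> module
  have hdet := congrArg det key
  rw [det_mul, det_fromBlocks_zero₁₂, det_fromBlocks_zero₂₁, det_one, mul_one, det_smul,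
    det_smul, det_transpose] at hdet
  have hne : (1 - l) ^ Fintype.card ι * D.det ≠ 0 :=
    mul_ne_zero (pow_ne_zero _ (sub_ne_zero.mpr hl.symm)) hD.ne_zero
  exact mul_right_cancel₀ hne hdet

theorem mem_spectrum_iff_det_smul_one_sub_eq_zero {X : Matrix ι ι K} {r : K} :
    r ∈ spectrum K X ↔ (r • 1 - X).det = 0 := by
  rw [mem_spectrum_iff_isRoot_charpoly, Polynomial.IsRoot, eval_charpoly, scalar_apply,
    smul_one_eq_diagonal]

theorem spectrum_transpose (X : Matrix ι ι K) : spectrum K Xᵀ = spectrum K X := by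
  ext r
  simp only [mem_spectrum_iff_isRoot_charpoly, charpoly_transpose]

theorem mem_spectrum_mul_inv_mul_mul_of_det_eq_zero {M N : Matrix ι ι K} (hN : N * N = 1)
    (hM : IsUnit M.det) {l : K} (h : (N * M - l • (M * N)).det = 0) :
    l ∈ spectrum K (N * M⁻¹ * N * M) := by
  have hfactor : l • 1 - N * M⁻¹ * N * M = -(N * M⁻¹ * (N * M - l • (M * N))) := by
    rw [mul_sub, Matrix.mul_smul, show N * M⁻¹ * (M * N) = N * (M⁻¹ * M) * N by noncomm_ring,
      nonsing_inv_mul M hM, mul_one, hN]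
    noncomm_ring
  rw [mem_spectrum_iff_det_smul_one_sub_eq_zero, hfactor, det_neg, det_mul, h, mul_zero, mul_zero]

theorem mem_spectrum_Nblock_mul_inv_mul_Nblock_mul {A B C D : Matrix ι ι K}
    (hM : fromBlocks A B C D ∈ symplecticGroup ι K) (hD : IsUnit D.det) {μ l : K}
    (hμ : μ ∈ spectrum K (C * Bᵀ)) (hl : (1 - l) ^ 2 = 4 * l * μ) (hl1 : l ≠ 1) :
    l ∈ spectrum K
      (Nblock ι K * (fromBlocks A B C D)⁻¹ * Nblock ι K * fromBlocks A B C D) := by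
  obtain ⟨hAD, hCD⟩ := mul_transpose_eq_of_fromBlocks_mem_symplecticGroup hM
  have hμ' : (μ • 1 - B * Cᵀ).det = 0 := by
    rwa [← mem_spectrum_iff_det_smul_one_sub_eq_zero, ← transpose_transpose B,
      ← transpose_mul, spectrum_transpose]
  refine mem_spectrum_mul_inv_mul_mul_of_det_eq_zero Nblock_mul_self
    (SymplecticGroup.symplectic_det hM) ?_
  rw [Nblock_mul_sub_smul_mul_Nblock, det_fromBlocks_pencil hAD hCD hD hl1, hl,
    show (4 * l) • (B * Cᵀ) - (4 * l * μ) • (1 : Matrix ι ι K) = (-(4 * l)) • (μ • 1 - B * Cᵀ)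
      by module, det_smul, hμ', mul_zero]

theorem map_nonsing_inv {S : Type*} [CommRing S] (f : R →+* S) {M : Matrix ι ι R}
    (hM : IsUnit M.det) : M⁻¹.map f = (M.map f)⁻¹ := by
  refine (inv_eq_left_inv ?_).symm
  rw [← f.mapMatrix_apply, ← f.mapMatrix_apply, ← map_mul, nonsing_inv_mul M hM, map_one]

end SymplecticPencil

theorem Complex.exists_one_sub_sq_eq_four_mul (μ : ℂ) : ∃ l : ℂ, (1 - l) ^ 2 = 4 * l * μ := by
  obtain ⟨s, hs⟩ := IsAlgClosed.exists_pow_nat_eq ((1 + 2 * μ) ^ 2 - 1) two_pos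
  exact ⟨1 + 2 * μ + s, by linear_combination hs⟩

theorem Complex.neg_one_lt_re_of_norm_eq_one {l : ℂ} (hnorm : ‖l‖ = 1) (hne : l ≠ -1) :
    -1 < l.re := by
  refine lt_of_le_of_ne (neg_le_of_abs_le (hnorm ▸ abs_re_le_norm l)) fun hre => hne ?_
  have him : l.im = 0 := abs_re_eq_norm.mp (by rw [← hre, hnorm, abs_neg, abs_one])
  exact Complex.ext (by simp [← hre]) (by simp [him])

theorem Complex.four_mul_eq_of_one_sub_sq_eq {l μ : ℂ} (hl : (1 - l) ^ 2 = 4 * l * μ)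
    (hnorm : ‖l‖ = 1) : 4 * μ = 2 * l.re - 2 := by
  have hconj : l * (starRingEnd ℂ) l = 1 := by
    rw [mul_conj, normSq_eq_norm_sq, hnorm]; norm_num
  have hre : l + (starRingEnd ℂ) l = 2 * l.re := by rw [add_conj]; push_cast; ring
  linear_combination hre - (starRingEnd ℂ l) * hl + (l - 2 - 4 * μ) * hconj

theorem Complex.im_eq_zero_and_re_mem_of_one_sub_sq_eq {l μ : ℂ} (hl : (1 - l) ^ 2 = 4 * l * μ)
    (hnorm : ‖l‖ = 1) (hne : l ≠ -1) : μ.im = 0 ∧ -1 < μ.re ∧ μ.re ≤ 0 := by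
  have h4 := four_mul_eq_of_one_sub_sq_eq hl hnorm
  have hre_gt := neg_one_lt_re_of_norm_eq_one hnorm hne
  have hre_le : l.re ≤ 1 := hnorm ▸ re_le_norm l
  have him := congrArg im h4
  have hre := congrArg re h4
  simp only [mul_im, re_ofNat, im_ofNat, zero_mul, add_zero, sub_im, ofReal_im, mul_zero,
    ofReal_re, sub_self, mul_eq_zero, OfNat.ofNat_ne_zero, false_or, mul_re, sub_zero,
    sub_re] at him hre
  exact ⟨him, by linarith, by linarith⟩

theorem stmt_11 (n : ℕ)
    (A B C D : Matrix (Fin n) (Fin n) ℝ)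
    (M : Matrix (Fin n ⊕ Fin n) (Fin n ⊕ Fin n) ℝ)
    (hM : M = Matrix.fromBlocks A B C D)
    (hsp : Mᵀ * Jmat n * M = Jmat n)
    (hD : IsUnit D)
    (hev : ∀ ω ∈ spectrum ℂ ((Nmat n * M⁻¹ * Nmat n * M).map (Complex.ofReal ·)),
      ‖ω‖ = 1 ∧ ω ≠ -1) :
    ∀ μ ∈ spectrum ℂ ((C * Bᵀ).map (Complex.ofReal ·)),
      μ.im = 0 ∧ -1 < μ.re ∧ μ.re ≤ 0 := by
  intro μ hμ
  rcases eq_or_ne μ 0 with rfl | hμ0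
  · simp
  obtain ⟨l, hl⟩ := Complex.exists_one_sub_sq_eq_four_mul μ
  have hl1 : l ≠ 1 := by
    rintro rfl
    exact hμ0 (by linear_combination (-1 / 4 : ℂ) * hl)
  let f := Complex.ofRealHom
  have hMsp : M ∈ symplecticGroup (Fin n) ℝ := SymplecticGroup.mem_iff'.2 hsp
  have hMc : fromBlocks (A.map f) (B.map f) (C.map f) (D.map f) ∈ symplecticGroup (Fin n) ℂ := by
    rw [← fromBlocks_map, ← hM]
    exact SymplecticGroup.map_mem hMsp f
  have hDc : IsUnit (D.map f).det := by
    rw [← f.mapMatrix_apply, ← f.map_det]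
    exact ((isUnit_iff_isUnit_det D).1 hD).map f
  have hμc : μ ∈ spectrum ℂ (C.map f * (B.map f)ᵀ) := by
    rwa [← transpose_map, ← Matrix.map_mul]
  have hlc := mem_spectrum_Nblock_mul_inv_mul_Nblock_mul hMc hDc hμc hl hl1
  rw [← fromBlocks_map, ← hM, ← map_nonsing_inv f (SymplecticGroup.symplectic_det hMsp),
    ← map_Nblock f, ← Matrix.map_mul, ← Matrix.map_mul, ← Matrix.map_mul] at hlc
  obtain ⟨hnorm, hne⟩ := hev l hlc
  exact Complex.im_eq_zero_and_re_mem_of_one_sub_sq_eq hl hnorm hne
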